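/- arXiv:2507.19763 — 2 statements merged into one kernel-verified Lean document; each statement's English description precedes it below -/
import Mathlib

section
/- Let W ≥ 0 be a real random variable, θ > 0, k a positive integer, and let S be a random variable following the Gamma distribution with shape parameter k and scale parameter θ, independent of W. Define L(s) = E[e^{−sW/θ}] for s > 0. Then L is infinitely differentiable on (0,∞) and P(S > W) = Σ_{i=0}^{k−1} ((−1)^i / i!) · L^{(i)}(1), where L^{(i)} denotes the i-th derivative of L. -/
open MeasureTheory ProbabilityTheory

namespace GammaCcdfAux

open MeasureTheory ProbabilityTheory Real Filter Set


lemma pow_mul_exp_neg_le {n : ℕ} {b t : ℝ} (hb : 0 < b) (ht : 0 ≤ t) :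
    t ^ n * Real.exp (-(b * t)) ≤ n.factorial / b ^ n := by
  have h1 : (b * t) ^ n / (n.factorial : ℝ) ≤ Real.exp (b * t) := by
    calc (b * t) ^ n / (n.factorial : ℝ)
        ≤ ∑ i ∈ Finset.range (n + 1), (b * t) ^ i / (i.factorial : ℝ) := by
          refine Finset.single_le_sum (f := fun i => (b * t) ^ i / (i.factorial : ℝ))
            (fun i _ => by positivity) (Finset.self_mem_range_succ n)
      _ ≤ Real.exp (b * t) := Real.sum_le_exp_of_nonneg (by positivity) _
  have h2 : (b * t) ^ n ≤ (n.factorial : ℝ) * Real.exp (b * t) := by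
    rw [div_le_iff₀ (by positivity : (0:ℝ) < (n.factorial : ℝ))] at h1
    linarith [h1]
  have h3 : (b * t) ^ n * Real.exp (-(b * t)) ≤ (n.factorial : ℝ) := by
    rw [Real.exp_neg]
    calc (b * t) ^ n * (Real.exp (b * t))⁻¹
        ≤ ((n.factorial : ℝ) * Real.exp (b * t)) * (Real.exp (b * t))⁻¹ := by
          apply mul_le_mul_of_nonneg_right h2 (by positivity)
      _ = (n.factorial : ℝ) := by
          field_simp
  have hbn : (0:ℝ) < b ^ n := by positivity
  rw [mul_pow] at h3
  calc t ^ n * Real.exp (-(b * t))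
      = (b ^ n * t ^ n * Real.exp (-(b * t))) / b ^ n := by field_simp
    _ ≤ (n.factorial : ℝ) / b ^ n := by
        gcongr


section Laplace

variable {Ω : Type*} [MeasurableSpace Ω] (ν : Measure Ω) [IsProbabilityMeasure ν]
  (c : Ω → ℝ)

/-- The candidate `n`-th derivative of the Laplace transform. -/
noncomputable def G (n : ℕ) (s : ℝ) : ℝ := ∫ ω, (-c ω) ^ n * Real.exp (-(s * c ω)) ∂ν

variable {ν c}
variable (hc : Measurable c) (hcnn : ∀ ω, 0 ≤ c ω)
include hc

lemma G_meas (n : ℕ) (s : ℝ) :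
    AEStronglyMeasurable (fun ω => (-c ω) ^ n * Real.exp (-(s * c ω))) ν := by
  exact ((hc.neg.pow_const n).mul ((hc.const_mul s).neg.exp)).aestronglyMeasurable

include hcnn

lemma G_bound (n : ℕ) {s : ℝ} (hs : 0 < s) (ω : Ω) :
    ‖(-c ω) ^ n * Real.exp (-(s * c ω))‖ ≤ (n.factorial : ℝ) / s ^ n := by
  have h0 : ‖(-c ω) ^ n * Real.exp (-(s * c ω))‖ = c ω ^ n * Real.exp (-(s * c ω)) := by
    rw [norm_mul, norm_pow, norm_neg, Real.norm_of_nonneg (hcnn ω),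
      Real.norm_of_nonneg (Real.exp_pos _).le]
  rw [h0]
  exact pow_mul_exp_neg_le hs (hcnn ω)

lemma G_integrable (n : ℕ) {s : ℝ} (hs : 0 < s) :
    Integrable (fun ω => (-c ω) ^ n * Real.exp (-(s * c ω))) ν := by
  refine Integrable.mono' (integrable_const ((n.factorial : ℝ) / s ^ n)) (G_meas hc n s) ?_
  exact ae_of_all _ (fun ω => G_bound hc hcnn n hs ω)

lemma G_hasDerivAt (n : ℕ) {s : ℝ} (hs : 0 < s) :
    HasDerivAt (G ν c n) (G ν c (n + 1) s) s := by
  have hball : ∀ x ∈ Metric.ball s (s / 2), s / 2 ≤ x := by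
    intro x hx
    rw [Metric.mem_ball, Real.dist_eq, abs_lt] at hx
    linarith [hx.1]
  have key := hasDerivAt_integral_of_dominated_loc_of_deriv_le (μ := ν)
    (F := fun x ω => (-c ω) ^ n * Real.exp (-(x * c ω)))
    (F' := fun x ω => (-c ω) ^ (n + 1) * Real.exp (-(x * c ω)))
    (bound := fun _ => ((n + 1).factorial : ℝ) / (s / 2) ^ (n + 1))
    (Metric.ball_mem_nhds s (half_pos hs))
    (Filter.Eventually.of_forall (fun x => G_meas hc n x))
    (G_integrable hc hcnn n hs)
    (G_meas hc (n + 1) s)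
    ?_ (integrable_const _) ?_
  · exact key.2
  · refine ae_of_all _ (fun ω x hx => ?_)
    have h0 : ‖(-c ω) ^ (n + 1) * Real.exp (-(x * c ω))‖
        = c ω ^ (n + 1) * Real.exp (-(x * c ω)) := by
      rw [norm_mul, norm_pow, norm_neg, Real.norm_of_nonneg (hcnn ω),
        Real.norm_of_nonneg (Real.exp_pos _).le]
    rw [h0]
    calc c ω ^ (n + 1) * Real.exp (-(x * c ω))
        ≤ c ω ^ (n + 1) * Real.exp (-((s / 2) * c ω)) := by
          have := hcnn ω
          apply mul_le_mul_of_nonneg_left ?_ (by positivity)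
          exact Real.exp_le_exp.2 (by nlinarith [hball x hx])
      _ ≤ ((n + 1).factorial : ℝ) / (s / 2) ^ (n + 1) :=
          pow_mul_exp_neg_le (half_pos hs) (hcnn ω)
  · refine ae_of_all _ (fun ω x _ => ?_)
    have h1 : HasDerivAt (fun x : ℝ => -(x * c ω)) (-c ω) x :=
      ((hasDerivAt_id x).mul_const (c ω)).neg.congr_deriv (by ring)
    have h2 : HasDerivAt (fun x : ℝ => Real.exp (-(x * c ω)))
        (Real.exp (-(x * c ω)) * (-c ω)) x := h1.exp
    have h3 := h2.const_mul ((-c ω) ^ n)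
    convert h3 using 1
    show (-c ω) ^ (n + 1) * Real.exp (-(x * c ω)) = _
    rw [pow_succ]
    ring
    rfl


/-! Complex extension and analyticity. -/

lemma Fc_meas (z : ℂ) :
    AEStronglyMeasurable (fun ω => Complex.exp (-(z * (c ω : ℂ)))) ν := by
  exact (Complex.measurable_exp.comp
    (((measurable_const.mul (Complex.measurable_ofReal.comp hc))).neg)).aestronglyMeasurable

include hcnn in
lemma Fc_norm (z : ℂ) (ω : Ω) :
    ‖Complex.exp (-(z * (c ω : ℂ)))‖ = Real.exp (-(z.re * c ω)) := by
  rw [Complex.norm_exp]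
  congr 1
  simp [Complex.mul_re]

include hcnn in
lemma Fc_integrable {z : ℂ} (hz : 0 ≤ z.re) :
    Integrable (fun ω => Complex.exp (-(z * (c ω : ℂ)))) ν := by
  refine Integrable.mono' (integrable_const (1 : ℝ)) (Fc_meas hc hcnn z) ?_
  refine ae_of_all _ (fun ω => ?_)
  rw [Fc_norm hc hcnn z ω]
  rw [Real.exp_le_one_iff]
  have := hcnn ω
  nlinarith

include hcnn in
lemma Fc_hasDerivAt {z : ℂ} (hz : 0 < z.re) :
    HasDerivAt (fun z : ℂ => ∫ ω, Complex.exp (-(z * (c ω : ℂ))) ∂ν)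
      (∫ ω, -(c ω : ℂ) * Complex.exp (-(z * (c ω : ℂ))) ∂ν) z := by
  have hmeas' : ∀ x : ℂ, AEStronglyMeasurable
      (fun ω => -(c ω : ℂ) * Complex.exp (-(x * (c ω : ℂ)))) ν := fun x =>
    (((Complex.measurable_ofReal.comp hc).neg).mul
      (Complex.measurable_exp.comp
        (((measurable_const.mul (Complex.measurable_ofReal.comp hc))).neg))).aestronglyMeasurable
  have key := hasDerivAt_integral_of_dominated_loc_of_deriv_le (μ := ν) (𝕜 := ℂ)
    (F := fun x ω => Complex.exp (-(x * (c ω : ℂ))))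
    (F' := fun x ω => -(c ω : ℂ) * Complex.exp (-(x * (c ω : ℂ))))
    (bound := fun _ => ((1 : ℕ).factorial : ℝ) / (z.re / 2) ^ (1 : ℕ))
    (Metric.ball_mem_nhds z (half_pos hz))
    (Filter.Eventually.of_forall (fun x => Fc_meas hc hcnn x))
    (Fc_integrable hc hcnn hz.le)
    (hmeas' z) ?_ (integrable_const _) ?_
  · exact key.2
  · refine ae_of_all _ (fun ω x hx => ?_)
    have hxre : z.re / 2 ≤ x.re := by
      rw [Metric.mem_ball] at hx
      have := Complex.abs_re_le_norm (x - z)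
      have hd : dist x z = ‖x - z‖ := dist_eq_norm x z
      rw [hd] at hx
      have := abs_lt.1 (lt_of_le_of_lt this hx)
      have hsub : (x - z).re = x.re - z.re := by simp
      rw [hsub] at this
      linarith [this.1]
    rw [norm_mul, norm_neg, Complex.norm_real, Real.norm_of_nonneg (hcnn ω),
      Fc_norm hc hcnn x ω]
    calc c ω * Real.exp (-(x.re * c ω))
        ≤ c ω * Real.exp (-((z.re / 2) * c ω)) := by
          have := hcnn ω
          apply mul_le_mul_of_nonneg_left ?_ this
          exact Real.exp_le_exp.2 (by nlinarith)
      _ = c ω ^ (1 : ℕ) * Real.exp (-((z.re / 2) * c ω)) := by rw [pow_one]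
      _ ≤ ((1 : ℕ).factorial : ℝ) / (z.re / 2) ^ (1 : ℕ) :=
          pow_mul_exp_neg_le (half_pos hz) (hcnn ω)
  · refine ae_of_all _ (fun ω x _ => ?_)
    have h1 : HasDerivAt (fun x : ℂ => -(x * (c ω : ℂ))) (-(c ω : ℂ)) x :=
      ((hasDerivAt_id x).mul_const ((c ω : ℂ))).neg.congr_deriv (by ring)
    have h2 := h1.cexp
    exact h2.congr_deriv (by ring)

include hcnn in
lemma L_analytic :
    AnalyticOnNhd ℝ (fun s : ℝ => ∫ ω, Real.exp (-(s * c ω)) ∂ν) (Set.Ioi (0:ℝ)) := by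
  set Fc : ℂ → ℂ := fun z => ∫ ω, Complex.exp (-(z * (c ω : ℂ))) ∂ν with hFc
  have hU : IsOpen {z : ℂ | 0 < z.re} := isOpen_lt continuous_const Complex.continuous_re
  have hFdiff : DifferentiableOn ℂ Fc {z : ℂ | 0 < z.re} := fun z hz =>
    ((Fc_hasDerivAt hc hcnn hz).differentiableAt).differentiableWithinAt
  have hFan : AnalyticOnNhd ℂ Fc {z : ℂ | 0 < z.re} := hFdiff.analyticOnNhd hU
  have hFanR : AnalyticOnNhd ℝ Fc {z : ℂ | 0 < z.re} := hFan.restrictScalars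
  have hcomp : AnalyticOnNhd ℝ (fun s : ℝ => Fc (s : ℂ)) (Set.Ioi (0:ℝ)) := by
    refine hFanR.comp (Complex.ofRealCLM.analyticOnNhd _) ?_
    intro s hs
    simpa using hs
  have hre : AnalyticOnNhd ℝ (fun s : ℝ => (Fc (s : ℂ)).re) (Set.Ioi (0:ℝ)) :=
    fun x hx => (Complex.reCLM.analyticAt _).comp (hcomp x hx)
  refine hre.congr isOpen_Ioi ?_
  intro s hs
  have hint : Integrable (fun ω => Complex.exp (-((s : ℂ) * (c ω : ℂ)))) ν :=
    Fc_integrable hc hcnn (by simpa using (le_of_lt hs))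
  have : (Fc (s : ℂ)).re = ∫ ω, (Complex.exp (-((s : ℂ) * (c ω : ℂ)))).re ∂ν := by
    rw [hFc]
    exact (Complex.reCLM.integral_comp_comm hint).symm
  show (Fc (s : ℂ)).re = ∫ ω, Real.exp (-(s * c ω)) ∂ν
  rw [this]
  refine integral_congr_ae (ae_of_all _ (fun ω => ?_))
  show (Complex.exp (-((s:ℂ) * (c ω : ℂ)))).re = Real.exp (-(s * c ω))
  have h : -((s : ℂ) * (c ω : ℂ)) = ((-(s * c ω) : ℝ) : ℂ) := by push_cast; ring
  rw [h, Complex.exp_ofReal_re]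


include hcnn in
lemma iteratedDeriv_G (n : ℕ) {s : ℝ} (hs : 0 < s) :
    iteratedDeriv n (G ν c 0) s = G ν c n s := by
  induction n generalizing s with
  | zero => simp [iteratedDeriv_zero]
  | succ n ih =>
    rw [iteratedDeriv_succ]
    have hev : iteratedDeriv n (G ν c 0) =ᶠ[nhds s] G ν c n := by
      filter_upwards [isOpen_Ioi.mem_nhds hs] with x hx
      exact ih hx
    rw [hev.deriv_eq]
    exact (G_hasDerivAt hc hcnn n hs).deriv

end Laplace

section GammaTail

lemma hasDerivAt_tailSum (n : ℕ) (r x : ℝ) :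
    HasDerivAt (fun y => Real.exp (-(r * y))
        * ∑ i ∈ Finset.range (n + 1), (r * y) ^ i / (i.factorial : ℝ))
      (-(r * Real.exp (-(r * x)) * (r * x) ^ n / (n.factorial : ℝ))) x := by
  induction n with
  | zero =>
    have h1 : HasDerivAt (fun y : ℝ => -(r * y)) (-r) x :=
      (((hasDerivAt_id x).const_mul r).neg).congr_deriv (by ring)
    have h2 := h1.exp
    have h3 : (fun y : ℝ => Real.exp (-(r * y))
        * ∑ i ∈ Finset.range 1, (r * y) ^ i / (i.factorial : ℝ))
        = fun y => Real.exp (-(r * y)) := by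
      funext y; simp
    rw [h3]
    exact h2.congr_deriv (by norm_num; ring)
  | succ n ih =>
    have hsum : (fun y : ℝ => Real.exp (-(r * y))
        * ∑ i ∈ Finset.range (n + 2), (r * y) ^ i / (i.factorial : ℝ))
        = fun y => (Real.exp (-(r * y))
            * ∑ i ∈ Finset.range (n + 1), (r * y) ^ i / (i.factorial : ℝ))
            + Real.exp (-(r * y)) * ((r * y) ^ (n + 1) / (((n+1).factorial : ℕ) : ℝ)) := by
      funext y; rw [Finset.sum_range_succ, mul_add]
    rw [hsum]
    have h1 : HasDerivAt (fun y : ℝ => -(r * y)) (-r) x :=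
      (((hasDerivAt_id x).const_mul r).neg).congr_deriv (by ring)
    have h2 := h1.exp
    have hry : HasDerivAt (fun y : ℝ => r * y) r x :=
      ((hasDerivAt_id x).const_mul r).congr_deriv (by ring)
    have h3 : HasDerivAt (fun y : ℝ => (r * y) ^ (n + 1) / (((n+1).factorial : ℕ) : ℝ))
        ((((n : ℝ) + 1) * (r * x) ^ n * r) / (((n+1).factorial : ℕ) : ℝ)) x := by
      have h := (hry.pow (n + 1)).div_const (((n+1).factorial : ℕ) : ℝ)
      simpa using h
    have h5 := ih.add (h2.mul h3)
    refine h5.congr_deriv ?_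
    have hfac : (((n+1).factorial : ℕ) : ℝ) = ((n : ℝ) + 1) * (n.factorial : ℝ) := by
      push_cast [Nat.factorial_succ]; ring
    have hne : (n.factorial : ℝ) ≠ 0 := Nat.cast_ne_zero.2 (Nat.factorial_ne_zero n)
    have hne1 : ((n : ℝ) + 1) ≠ 0 := by positivity
    rw [hfac]
    field_simp
    ring

lemma tendsto_tailSum (n : ℕ) {r : ℝ} (hr : 0 < r) :
    Filter.Tendsto (fun y => Real.exp (-(r * y))
        * ∑ i ∈ Finset.range (n + 1), (r * y) ^ i / (i.factorial : ℝ)) atTop (nhds 0) := by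
  have hterm : ∀ i : ℕ, Filter.Tendsto (fun y : ℝ => (r * y) ^ i * Real.exp (-(r * y)))
      atTop (nhds 0) := by
    intro i
    have hcomp : Filter.Tendsto (fun y : ℝ => r * y) atTop atTop :=
      Filter.Tendsto.const_mul_atTop hr tendsto_id
    simpa [Function.comp_def] using (tendsto_pow_mul_exp_neg_atTop_nhds_zero i).comp hcomp
  have heq : (fun y => Real.exp (-(r * y))
      * ∑ i ∈ Finset.range (n + 1), (r * y) ^ i / (i.factorial : ℝ))
      = fun y => ∑ i ∈ Finset.range (n + 1),
          ((r * y) ^ i * Real.exp (-(r * y))) / (i.factorial : ℝ) := by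
    funext y
    rw [Finset.mul_sum]
    exact Finset.sum_congr rfl (fun i _ => by ring)
  rw [heq]
  have := tendsto_finset_sum (Finset.range (n + 1))
    (fun i _ => (hterm i).div_const (i.factorial : ℝ))
  simpa using this

lemma tail_integral_and_integrable (n : ℕ) {r : ℝ} (hr : 0 < r) {w : ℝ} (hw : 0 ≤ w) :
    IntegrableOn (fun x => r * Real.exp (-(r * x)) * (r * x) ^ n / (n.factorial : ℝ)) (Ioi w)
    ∧ (∫ x in Ioi w, r * Real.exp (-(r * x)) * (r * x) ^ n / (n.factorial : ℝ))
      = Real.exp (-(r * w)) * ∑ i ∈ Finset.range (n + 1), (r * w) ^ i / (i.factorial : ℝ) := by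
  set g : ℝ → ℝ := fun y => -(Real.exp (-(r * y))
      * ∑ i ∈ Finset.range (n + 1), (r * y) ^ i / (i.factorial : ℝ)) with hg
  have hderiv : ∀ x ∈ Ioi w, HasDerivAt g
      (r * Real.exp (-(r * x)) * (r * x) ^ n / (n.factorial : ℝ)) x := fun x _ =>
    ((hasDerivAt_tailSum n r x).neg).congr_deriv (by ring)
  have hcont : ContinuousWithinAt g (Ici w) w :=
    ((hasDerivAt_tailSum n r w).neg).continuousAt.continuousWithinAt
  have hnonneg : ∀ x ∈ Ioi w, 0 ≤ r * Real.exp (-(r * x)) * (r * x) ^ n / (n.factorial : ℝ) := by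
    intro x hx
    have hx0 : (0:ℝ) ≤ x := le_trans hw (le_of_lt hx)
    positivity
  have htends : Filter.Tendsto g atTop (nhds 0) := by
    rw [hg]
    simpa using (tendsto_tailSum n hr).neg
  refine ⟨integrableOn_Ioi_deriv_of_nonneg hcont hderiv hnonneg htends, ?_⟩
  rw [integral_Ioi_of_hasDerivAt_of_nonneg hcont hderiv hnonneg htends]
  simp [hg]

lemma gammaMeasure_Ioi {k : ℕ} (hk : 0 < k) {r : ℝ} (hr : 0 < r) {w : ℝ} (hw : 0 ≤ w) :
    gammaMeasure (k : ℝ) r (Ioi w) = ENNReal.ofReal (Real.exp (-(r * w))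
      * ∑ i ∈ Finset.range k, (r * w) ^ i / (i.factorial : ℝ)) := by
  obtain ⟨n, rfl⟩ : ∃ n, k = n + 1 := ⟨k - 1, (Nat.succ_pred_eq_of_pos hk).symm⟩
  rw [gammaMeasure, withDensity_apply _ measurableSet_Ioi]
  have heq : ∀ x ∈ Ioi w, gammaPDF ((n + 1 : ℕ) : ℝ) r x
      = ENNReal.ofReal (r * Real.exp (-(r * x)) * (r * x) ^ n / (n.factorial : ℝ)) := by
    intro x hx
    have hx0 : (0:ℝ) ≤ x := le_trans hw (le_of_lt hx)
    rw [gammaPDF_of_nonneg hx0]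
    congr 1
    have h1 : Real.Gamma ((n + 1 : ℕ) : ℝ) = (n.factorial : ℝ) := by
      push_cast
      exact_mod_cast Real.Gamma_nat_eq_factorial n
    have h2 : x ^ (((n + 1 : ℕ) : ℝ) - 1) = x ^ (n : ℕ) := by
      push_cast
      rw [show ((n:ℝ) + 1 - 1) = ((n : ℕ) : ℝ) by push_cast; ring, Real.rpow_natCast]
    have h3 : r ^ (((n + 1 : ℕ) : ℝ)) = r ^ ((n + 1 : ℕ)) := Real.rpow_natCast r (n+1)
    rw [h1, h2, h3, mul_pow, pow_succ]
    have hne : (n.factorial : ℝ) ≠ 0 := Nat.cast_ne_zero.2 (Nat.factorial_ne_zero n)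
    field_simp
  rw [setLIntegral_congr_fun measurableSet_Ioi heq]
  rw [← ofReal_integral_eq_lintegral_ofReal (tail_integral_and_integrable n hr hw).1 ?_]
  · rw [(tail_integral_and_integrable n hr hw).2]
  · refine (ae_restrict_iff' measurableSet_Ioi).2 (ae_of_all _ (fun x hx => ?_))
    have hx0 : (0:ℝ) ≤ x := le_trans hw (le_of_lt hx)
    positivity

end GammaTail

end GammaCcdfAux

open GammaCcdfAux in
set_option maxHeartbeats 1000000 in
/-- Let `W ≥ 0` be a real random variable, `θ > 0`, `k` a positive integer, and `S` a
random variable following the Gamma distribution with shape `k` and scale `θ`,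
independent of `W`.  Define `L(s) = E[e^(−s W/θ)]` for `s > 0`.  Then `L` is infinitely
differentiable on `(0, ∞)` and `P(S > W) = ∑_{i=0}^{k−1} ((−1)^i / i!) L^(i)(1)`. -/
theorem gamma_ccdf_laplace_derivatives
    {Ω : Type*} [MeasurableSpace Ω] (μ : Measure Ω) [IsProbabilityMeasure μ]
    (W S : Ω → ℝ) (hW : Measurable W) (hS : Measurable S)
    (hWnn : ∀ ω, 0 ≤ W ω)
    (k : ℕ) (hk : 0 < k) (θ : ℝ) (hθ : 0 < θ)
    (hSdist : μ.map S = gammaMeasure k θ⁻¹)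
    (hindep : IndepFun W S μ) :
    ContDiffOn ℝ (⊤ : ℕ∞) (fun s : ℝ => ∫ ω, Real.exp (-s * W ω / θ) ∂μ) (Set.Ioi 0) ∧
    (μ {ω | W ω < S ω}).toReal
      = ∑ i ∈ Finset.range k, (-1 : ℝ) ^ i / (Nat.factorial i : ℝ) *
          iteratedDeriv i (fun s : ℝ => ∫ ω, Real.exp (-s * W ω / θ) ∂μ) 1 := by
  classical
  have hc : Measurable (fun ω => θ⁻¹ * W ω) := hW.const_mul θ⁻¹
  have hcnn : ∀ ω, 0 ≤ θ⁻¹ * W ω := fun ω => mul_nonneg (inv_nonneg.2 hθ.le) (hWnn ω)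
  have key1 : ∀ (s : ℝ) (ω : Ω), -s * W ω / θ = -(s * (θ⁻¹ * W ω)) := by
    intro s ω; rw [div_eq_mul_inv]; ring
  have hLeq : (fun s : ℝ => ∫ ω, Real.exp (-s * W ω / θ) ∂μ)
      = (fun s : ℝ => ∫ ω, Real.exp (-(s * (θ⁻¹ * W ω))) ∂μ) := by
    funext s
    simp only [key1]
  have hG0 : GammaCcdfAux.G μ (fun ω => θ⁻¹ * W ω) 0
      = (fun s : ℝ => ∫ ω, Real.exp (-(s * (θ⁻¹ * W ω))) ∂μ) := by
    funext s
    unfold GammaCcdfAux.G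
    simp only [pow_zero, one_mul]
  constructor
  · rw [hLeq]
    exact (L_analytic hc hcnn).contDiffOn (uniqueDiffOn_Ioi 0)
  -- Part 2
  have hr : (0:ℝ) < θ⁻¹ := inv_pos.2 hθ
  haveI hprobγ : IsProbabilityMeasure (gammaMeasure (k:ℝ) θ⁻¹) :=
    isProbabilityMeasure_gammaMeasure (Nat.cast_pos.2 hk) hr
  have hsetm : MeasurableSet {p : ℝ × ℝ | p.1 < p.2} :=
    measurableSet_lt measurable_fst measurable_snd
  have hmap : μ.map (fun ω => (W ω, S ω)) = (μ.map W).prod (gammaMeasure k θ⁻¹) := by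
    rw [← hSdist]
    exact (ProbabilityTheory.indepFun_iff_map_prod_eq_prod_map_map
      hW.aemeasurable hS.aemeasurable).1 hindep
  have h1 : μ {ω | W ω < S ω}
      = ((μ.map W).prod (gammaMeasure k θ⁻¹)) {p : ℝ × ℝ | p.1 < p.2} := by
    rw [← hmap, Measure.map_apply (hW.prodMk hS) hsetm]
    rfl
  have h2 : ((μ.map W).prod (gammaMeasure k θ⁻¹)) {p : ℝ × ℝ | p.1 < p.2}
      = ∫⁻ w, gammaMeasure (k:ℝ) θ⁻¹ (Prod.mk w ⁻¹' {p : ℝ × ℝ | p.1 < p.2}) ∂(μ.map W) :=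
    Measure.prod_apply hsetm
  have h3 : (∫⁻ w, gammaMeasure (k:ℝ) θ⁻¹ (Prod.mk w ⁻¹' {p : ℝ × ℝ | p.1 < p.2}) ∂(μ.map W))
      = ∫⁻ ω, gammaMeasure (k:ℝ) θ⁻¹ (Prod.mk (W ω) ⁻¹' {p : ℝ × ℝ | p.1 < p.2}) ∂μ :=
    lintegral_map (measurable_measure_prodMk_left hsetm) hW
  have h4 : ∀ ω : Ω, gammaMeasure (k:ℝ) θ⁻¹ (Prod.mk (W ω) ⁻¹' {p : ℝ × ℝ | p.1 < p.2})
      = ENNReal.ofReal (Real.exp (-(θ⁻¹ * W ω))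
          * ∑ i ∈ Finset.range k, (θ⁻¹ * W ω) ^ i / (i.factorial : ℝ)) := by
    intro ω
    have hpre : Prod.mk (W ω) ⁻¹' {p : ℝ × ℝ | p.1 < p.2} = Set.Ioi (W ω) := rfl
    rw [hpre, gammaMeasure_Ioi hk hr (hWnn ω)]
  have hμeq : μ {ω | W ω < S ω} = ∫⁻ ω, ENNReal.ofReal (Real.exp (-(θ⁻¹ * W ω))
      * ∑ i ∈ Finset.range k, (θ⁻¹ * W ω) ^ i / (i.factorial : ℝ)) ∂μ := by
    rw [h1, h2, h3]
    simp only [h4]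
  have hφm : AEStronglyMeasurable (fun ω => Real.exp (-(θ⁻¹ * W ω))
      * ∑ i ∈ Finset.range k, (θ⁻¹ * W ω) ^ i / (i.factorial : ℝ)) μ := by
    apply Measurable.aestronglyMeasurable
    exact (hc.neg.exp).mul
      (Finset.measurable_sum _ (fun i _ => (hc.pow_const i).div_const _))
  have hφnn : 0 ≤ᵐ[μ] (fun ω => Real.exp (-(θ⁻¹ * W ω))
      * ∑ i ∈ Finset.range k, (θ⁻¹ * W ω) ^ i / (i.factorial : ℝ)) := by
    refine ae_of_all _ (fun ω => ?_)
    have h0 : 0 ≤ θ⁻¹ * W ω := hcnn ω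
    positivity
  have htoReal : (μ {ω | W ω < S ω}).toReal = ∫ ω, Real.exp (-(θ⁻¹ * W ω))
      * ∑ i ∈ Finset.range k, (θ⁻¹ * W ω) ^ i / (i.factorial : ℝ) ∂μ := by
    rw [hμeq, integral_eq_lintegral_of_nonneg_ae hφnn hφm]
  have hφsum : ∀ ω : Ω, Real.exp (-(θ⁻¹ * W ω))
      * ∑ i ∈ Finset.range k, (θ⁻¹ * W ω) ^ i / (i.factorial : ℝ)
      = ∑ i ∈ Finset.range k,
        ((-1:ℝ) ^ i / (i.factorial : ℝ)) * ((-(θ⁻¹ * W ω)) ^ i * Real.exp (-(1 * (θ⁻¹ * W ω)))) := by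
    intro ω
    rw [Finset.mul_sum]
    refine Finset.sum_congr rfl (fun i _ => ?_)
    have h : ((-1:ℝ) ^ i) * ((-1:ℝ) ^ i) = 1 := by
      rw [← pow_add, ← two_mul, pow_mul]
      norm_num
    calc Real.exp (-(θ⁻¹ * W ω)) * ((θ⁻¹ * W ω) ^ i / (i.factorial : ℝ))
        = (((-1:ℝ) ^ i) * ((-1:ℝ) ^ i))
            * (Real.exp (-(θ⁻¹ * W ω)) * ((θ⁻¹ * W ω) ^ i / (i.factorial : ℝ))) := by
          rw [h, one_mul]
      _ = ((-1:ℝ) ^ i / (i.factorial : ℝ))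
            * ((-(θ⁻¹ * W ω)) ^ i * Real.exp (-(1 * (θ⁻¹ * W ω)))) := by
          rw [neg_pow, one_mul]
          ring
  have hint : ∀ i ∈ Finset.range k, Integrable
      (fun ω => ((-1:ℝ) ^ i / (i.factorial : ℝ))
        * ((-(θ⁻¹ * W ω)) ^ i * Real.exp (-(1 * (θ⁻¹ * W ω))))) μ :=
    fun i _ => (G_integrable hc hcnn i one_pos).const_mul _
  have hsplit : (∫ ω, Real.exp (-(θ⁻¹ * W ω))
      * ∑ i ∈ Finset.range k, (θ⁻¹ * W ω) ^ i / (i.factorial : ℝ) ∂μ)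
      = ∑ i ∈ Finset.range k,
        ((-1:ℝ) ^ i / (i.factorial : ℝ)) * GammaCcdfAux.G μ (fun ω => θ⁻¹ * W ω) i 1 := by
    simp only [hφsum]
    rw [integral_finset_sum _ hint]
    refine Finset.sum_congr rfl (fun i _ => ?_)
    rw [integral_const_mul]
    rfl
  rw [htoReal, hsplit]
  refine Finset.sum_congr rfl (fun i _ => ?_)
  rw [hLeq, ← hG0, iteratedDeriv_G hc hcnn i one_pos]
end

section
/- Let S, I₂ be nonnegative real random variables (possibly dependent on each other), with S integrable, and let I₁ be a nonnegative real random variable independent of the pair (S, I₂). Let c > 0 be a constant. Then E[ln(1 + S/(I₁ + I₂ + c))] = ∫_0^∞ (e^{−sc}/s) · E[e^{−s I₁}] · ( E[e^{−s I₂}] − E[e^{−s(I₂ + S)}] ) ds. -/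
/-!
For `0 < a ≤ b`, Frullani's integral gives `log (b / a) = ∫₀^∞ s⁻¹ (e^{-a s} - e^{-b s}) ds`
with a nonnegative integrand. Taking `a = I₁ + I₂ + c` and `b = a + S`, Tonelli's theorem
exchanges the expectation with the `s`-integral, and the independence of `I₁` from `(S, I₂)`
factors `E[e^{-s(I₁ + I₂)}]` and `E[e^{-s(I₁ + I₂ + S)}]` into products of Laplace transforms.
-/

open MeasureTheory ProbabilityTheory
open Real Set Function

theorem inv_mul_exp_neg_mul_sub_nonneg {a b : ℝ} (hab : a ≤ b) (x : ℝ) :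
    0 ≤ x⁻¹ * (exp (-(x * a)) - exp (-(x * b))) := by
  rcases le_or_gt x 0 with hx | hx
  · exact mul_nonneg_of_nonpos_of_nonpos (inv_nonpos.2 hx)
      (sub_nonpos.2 (exp_le_exp.2 (by nlinarith)))
  · exact mul_nonneg (inv_nonneg.2 hx.le) (sub_nonneg.2 (exp_le_exp.2 (by nlinarith)))

theorem integrableOn_Ioi_inv_mul_exp_neg_mul_sub {a b : ℝ} (ha : 0 < a) (hb : 0 < b) :
    IntegrableOn (fun x => x⁻¹ * (exp (-(x * a)) - exp (-(x * b)))) (Ioi 0) := by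
  wlog hab : a ≤ b generalizing a b
  · refine (this hb ha (le_of_not_ge hab)).neg.congr_fun (fun x _ => ?_) measurableSet_Ioi
    simp only [Pi.neg_apply]
    ring
  -- `1 - t ≤ exp (-t)` with `t = (b - a) x` bounds the integrand by `(b - a) exp (-a x)`
  refine Integrable.mono' ((exp_neg_integrableOn_Ioi 0 ha).const_mul (b - a))
    (by fun_prop) ((ae_restrict_iff' measurableSet_Ioi).2 (ae_of_all _ fun x hx => ?_))
  have hx : 0 < x := hx
  have hsplit : exp (-(x * b)) = exp (-(x * a)) * exp (-((b - a) * x)) := by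
    rw [← exp_add]; ring_nf
  have hlin := one_sub_le_exp_neg ((b - a) * x)
  rw [Real.norm_of_nonneg (inv_mul_exp_neg_mul_sub_nonneg hab x), inv_mul_le_iff₀ hx, hsplit,
    neg_mul, mul_comm a x]
  nlinarith [mul_le_mul_of_nonneg_left hlin (exp_pos (-(x * a))).le]

theorem integral_Ioi_inv_mul_exp_neg_mul_sub {a b : ℝ} (ha : 0 < a) (hb : 0 < b) :
    ∫ x in Ioi 0, x⁻¹ * (exp (-(x * a)) - exp (-(x * b))) = log (b / a) := by
  have hform : (fun x : ℝ => x⁻¹ • (exp (-(a * x)) - exp (-(b * x))))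
      = fun x => x⁻¹ * (exp (-(x * a)) - exp (-(x * b))) := by
    ext x
    rw [smul_eq_mul, mul_comm a, mul_comm b]
  have h := Frullani.integral_Ioi_eq (f := fun x => exp (-x)) (L := 1) (R := 0)
    (continuous_neg.rexp.locallyIntegrable.locallyIntegrableOn _) ha hb ?_ ?_
    (hform ▸ integrableOn_Ioi_inv_mul_exp_neg_mul_sub ha hb)
  · rw [hform] at h
    simpa using h
  · simpa using (continuous_neg.rexp.tendsto 0).mono_left nhdsWithin_le_nhds
  · exact tendsto_exp_neg_atTop_nhds_zero

theorem integral_integral_swap_of_nonneg {α β : Type*} [MeasurableSpace α] [MeasurableSpace β]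
    {μ : Measure α} {ν : Measure β} [SFinite μ] [SFinite ν] {f : α → β → ℝ}
    (hf : AEStronglyMeasurable (uncurry f) (μ.prod ν)) (hf0 : ∀ x y, 0 ≤ f x y)
    (hfx : ∀ᵐ x ∂μ, Integrable (f x) ν) (hfy : ∀ᵐ y ∂ν, Integrable (fun x => f x y) μ) :
    ∫ x, ∫ y, f x y ∂ν ∂μ = ∫ y, ∫ x, f x y ∂μ ∂ν := by
  -- both sides are `toReal` of the same double lower integral
  rw [integral_eq_lintegral_of_nonneg_ae (ae_of_all _ fun x => integral_nonneg (hf0 x))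
      hf.integral_prod_right',
    integral_eq_lintegral_of_nonneg_ae (ae_of_all _ fun y => integral_nonneg (hf0 · y))
      hf.prod_swap.integral_prod_right']
  congr 1
  calc ∫⁻ x, ENNReal.ofReal (∫ y, f x y ∂ν) ∂μ
      = ∫⁻ x, ∫⁻ y, ENNReal.ofReal (f x y) ∂ν ∂μ :=
        lintegral_congr_ae (hfx.mono fun x hx =>
          ofReal_integral_eq_lintegral_ofReal hx (ae_of_all _ (hf0 x)))
    _ = ∫⁻ y, ∫⁻ x, ENNReal.ofReal (f x y) ∂μ ∂ν :=
        lintegral_lintegral_swap hf.aemeasurable.ennreal_ofReal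
    _ = ∫⁻ y, ENNReal.ofReal (∫ x, f x y ∂μ) ∂ν :=
        lintegral_congr_ae (hfy.mono fun y hy =>
          (ofReal_integral_eq_lintegral_ofReal hy (ae_of_all _ (hf0 · y))).symm)

theorem integrable_exp_neg_mul_of_nonneg {Ω : Type*} [MeasurableSpace Ω] {μ : Measure Ω}
    [IsFiniteMeasure μ] {X : Ω → ℝ} (hX : AEMeasurable X μ) (hX0 : ∀ᵐ ω ∂μ, 0 ≤ X ω)
    {s : ℝ} (hs : 0 ≤ s) : Integrable (fun ω => exp (-(s * X ω))) μ :=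
  Integrable.of_bound (by fun_prop) 1 (hX0.mono fun ω hω => by
    rw [Real.norm_of_nonneg (exp_pos _).le, exp_le_one_iff, neg_nonpos]
    exact mul_nonneg hs hω)

theorem ProbabilityTheory.IndepFun.integral_exp_neg_mul_add {Ω : Type*} [MeasurableSpace Ω]
    {μ : Measure Ω} {X Y : Ω → ℝ} (h : IndepFun X Y μ) (hX : AEMeasurable X μ)
    (hY : AEMeasurable Y μ) (s : ℝ) :
    ∫ ω, exp (-(s * (X ω + Y ω))) ∂μ
      = (∫ ω, exp (-(s * X ω)) ∂μ) * ∫ ω, exp (-(s * Y ω)) ∂μ := by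
  simpa only [mgf, Pi.add_apply, neg_mul] using
    h.mgf_add' (t := -s) hX.aestronglyMeasurable hY.aestronglyMeasurable

theorem integral_log_div_eq_integral_laplace_sub {Ω : Type*} [MeasurableSpace Ω]
    {μ : Measure Ω} [IsFiniteMeasure μ] {A B : Ω → ℝ} (hA : Measurable A) (hB : Measurable B)
    (hA0 : ∀ ω, 0 < A ω) (hAB : ∀ ω, A ω ≤ B ω) :
    ∫ ω, log (B ω / A ω) ∂μ
      = ∫ s in Ioi 0, s⁻¹ * ((∫ ω, exp (-(s * A ω)) ∂μ) - ∫ ω, exp (-(s * B ω)) ∂μ) := by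
  let F : Ω → ℝ → ℝ := fun ω s => s⁻¹ * (exp (-(s * A ω)) - exp (-(s * B ω)))
  have hB0 : ∀ ω, 0 < B ω := fun ω => (hA0 ω).trans_le (hAB ω)
  have hexp_int : ∀ {X : Ω → ℝ}, Measurable X → (∀ ω, 0 < X ω) → ∀ s ∈ Ioi (0 : ℝ),
      Integrable (fun ω => exp (-(s * X ω))) μ := fun hX hX0 s hs =>
    integrable_exp_neg_mul_of_nonneg hX.aemeasurable (ae_of_all _ fun ω => (hX0 ω).le) hs.le
  calc ∫ ω, log (B ω / A ω) ∂μ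
      = ∫ ω, (∫ s in Ioi 0, F ω s) ∂μ :=
        integral_congr_ae (ae_of_all _ fun ω =>
          (integral_Ioi_inv_mul_exp_neg_mul_sub (hA0 ω) (hB0 ω)).symm)
    _ = ∫ s in Ioi 0, ∫ ω, F ω s ∂μ :=
        integral_integral_swap_of_nonneg
          (by fun_prop : Measurable fun p : Ω × ℝ => F p.1 p.2).aestronglyMeasurable
          (fun ω => inv_mul_exp_neg_mul_sub_nonneg (hAB ω))
          (ae_of_all _ fun ω => integrableOn_Ioi_inv_mul_exp_neg_mul_sub (hA0 ω) (hB0 ω))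
          ((ae_restrict_iff' measurableSet_Ioi).2 (ae_of_all _ fun s hs =>
            ((hexp_int hA hA0 s hs).sub (hexp_int hB hB0 s hs)).const_mul s⁻¹))
    _ = _ := setIntegral_congr_fun measurableSet_Ioi fun s hs => by
        rw [integral_const_mul, integral_sub (hexp_int hA hA0 s hs) (hexp_int hB hB0 s hs)]

theorem expected_log_rate_laplace_general
    {Ω : Type*} [MeasurableSpace Ω] (μ : Measure Ω) [IsProbabilityMeasure μ]
    (S I₁ I₂ : Ω → ℝ)
    (hS : Measurable S) (hI₁ : Measurable I₁) (hI₂ : Measurable I₂)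
    (hSnn : ∀ ω, 0 ≤ S ω) (hI₁nn : ∀ ω, 0 ≤ I₁ ω) (hI₂nn : ∀ ω, 0 ≤ I₂ ω)
    (hindep : IndepFun I₁ (fun ω => (S ω, I₂ ω)) μ)
    (c : ℝ) (hc : 0 < c) :
    ∫ ω, Real.log (1 + S ω / (I₁ ω + I₂ ω + c)) ∂μ
      = ∫ s in Set.Ioi (0 : ℝ),
          Real.exp (-(s * c)) / s * (∫ ω, Real.exp (-(s * I₁ ω)) ∂μ) *
            ((∫ ω, Real.exp (-(s * I₂ ω)) ∂μ) - ∫ ω, Real.exp (-(s * (I₂ ω + S ω))) ∂μ) := by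
  have hA : ∀ ω, 0 < I₁ ω + I₂ ω + c := fun ω => by linarith [hI₁nn ω, hI₂nn ω]
  have hfactor : ∀ Y : Ω → ℝ, Measurable Y → IndepFun I₁ Y μ → ∀ s,
      ∫ ω, exp (-(s * (I₁ ω + Y ω + c))) ∂μ
        = exp (-(s * c)) * ((∫ ω, exp (-(s * I₁ ω)) ∂μ) * ∫ ω, exp (-(s * Y ω)) ∂μ) := by
    intro Y hY hI₁Y s
    rw [← hI₁Y.integral_exp_neg_mul_add hI₁.aemeasurable hY.aemeasurable, ← integral_const_mul]
    congr 1 with ω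
    rw [← exp_add]
    ring_nf
  calc ∫ ω, log (1 + S ω / (I₁ ω + I₂ ω + c)) ∂μ
      = ∫ ω, log ((I₁ ω + (I₂ ω + S ω) + c) / (I₁ ω + I₂ ω + c)) ∂μ := by
        congr 1 with ω
        rw [one_add_div (hA ω).ne', add_right_comm _ c, ← add_assoc]
    _ = ∫ s in Ioi 0, s⁻¹ * ((∫ ω, exp (-(s * (I₁ ω + I₂ ω + c))) ∂μ)
          - ∫ ω, exp (-(s * (I₁ ω + (I₂ ω + S ω) + c))) ∂μ) :=
        integral_log_div_eq_integral_laplace_sub (by fun_prop) (by fun_prop) hA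
          fun ω => by linarith [hSnn ω]
    _ = _ := setIntegral_congr_fun measurableSet_Ioi fun s _ => by
        rw [hfactor I₂ hI₂ (hindep.comp measurable_id measurable_snd),
          hfactor (fun ω => I₂ ω + S ω) (hI₂.add hS)
            (hindep.comp measurable_id (measurable_snd.add measurable_fst))]
        ring

/-- Let `S, I₂` be nonnegative real random variables (possibly dependent), with `S`
integrable, and let `I₁` be a nonnegative real random variable independent of the pair
`(S, I₂)`.  Let `c > 0`.  Then
`E[ln(1 + S/(I₁ + I₂ + c))]
   = ∫_0^∞ (e^(−s c)/s) E[e^(−s I₁)] (E[e^(−s I₂)] − E[e^(−s (I₂ + S))]) ds`. -/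
theorem expected_log_rate_laplace
    {Ω : Type*} [MeasurableSpace Ω] (μ : Measure Ω) [IsProbabilityMeasure μ]
    (S I₁ I₂ : Ω → ℝ)
    (hS : Measurable S) (hI₁ : Measurable I₁) (hI₂ : Measurable I₂)
    (hSnn : ∀ ω, 0 ≤ S ω) (hI₁nn : ∀ ω, 0 ≤ I₁ ω) (hI₂nn : ∀ ω, 0 ≤ I₂ ω)
    (hSint : Integrable S μ)
    (hindep : IndepFun I₁ (fun ω => (S ω, I₂ ω)) μ)
    (c : ℝ) (hc : 0 < c) :
    ∫ ω, Real.log (1 + S ω / (I₁ ω + I₂ ω + c)) ∂μ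
      = ∫ s in Set.Ioi (0 : ℝ),
          Real.exp (-(s * c)) / s * (∫ ω, Real.exp (-(s * I₁ ω)) ∂μ) *
            ((∫ ω, Real.exp (-(s * I₂ ω)) ∂μ) - ∫ ω, Real.exp (-(s * (I₂ ω + S ω))) ∂μ) :=
  expected_log_rate_laplace_general μ S I₁ I₂ hS hI₁ hI₂ hSnn hI₁nn hI₂nn hindep c hc
end
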